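/- arXiv:2006.04920 — 3 statements merged into one kernel-verified Lean document; each statement's English description precedes it below -/
import Mathlib

section
/- For the interval-censored AFT loss with the logistic distribution and 0 < y̲ < ȳ, the minimizer over u of ℓ(u) = −ln(F_Z(s(ȳ)) − F_Z(s(y̲))) is u* = (ln y̲ + ln ȳ)/2, the midpoint of the log bounds. -/
/-!
Write `a = ln y̲`, `b = ln ȳ`, `d = (b - a) / (2σ) > 0` and `x = ((a + b) / 2 - u) / σ`, so that the two
standardized bounds are `x + d` and `x - d`. For the logistic CDF `F(z) = (1 + tanh (z / 2)) / 2`,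
the identity `tanh A - tanh B = sinh (A - B) / (cosh A cosh B)` gives
`F(x + d) - F(x - d) = sinh d / (cosh x + cosh d)`, which is largest exactly when `cosh x` is
smallest, i.e. at `x = 0`.
-/

open Real

noncomputable def logistic (z : ℝ) : ℝ := exp z / (1 + exp z)

theorem logistic_add_sub_logistic_sub (x d : ℝ) :
    logistic (x + d) - logistic (x - d) = sinh d / (cosh x + cosh d) := by
  simp only [logistic, sinh_eq, cosh_eq, exp_add, exp_sub, exp_neg]
  have hx := exp_pos x
  have hd := exp_pos d
  field_simp
  ring

theorem logistic_add_sub_logistic_sub_pos (x : ℝ) {d : ℝ} (hd : 0 < d) :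
    0 < logistic (x + d) - logistic (x - d) := by
  rw [logistic_add_sub_logistic_sub]
  exact div_pos (sinh_pos_iff.mpr hd) (by positivity)

theorem logistic_add_sub_logistic_sub_lt {x d : ℝ} (hd : 0 < d) (hx : x ≠ 0) :
    logistic (x + d) - logistic (x - d) < logistic (0 + d) - logistic (0 - d) := by
  rw [logistic_add_sub_logistic_sub, logistic_add_sub_logistic_sub, cosh_zero]
  exact div_lt_div_of_pos_left (sinh_pos_iff.mpr hd) (by positivity)
    (by linarith [one_lt_cosh.mpr hx])

theorem stmt_17 (σ yl yu : ℝ) (hσ : 0 < σ) (hyl : 0 < yl) (hlu : yl < yu)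
    (FZ : ℝ → ℝ) (hFZ : ∀ z, FZ z = Real.exp z / (1 + Real.exp z))
    (ℓ : ℝ → ℝ)
    (hℓ : ∀ u, ℓ u =
      -Real.log (FZ ((Real.log yu - u) / σ) - FZ ((Real.log yl - u) / σ))) :
    ∀ u : ℝ, u ≠ (Real.log yl + Real.log yu) / 2 →
      ℓ ((Real.log yl + Real.log yu) / 2) < ℓ u := by
  intro u hu
  set m := (log yl + log yu) / 2
  set d := (log yu - log yl) / (2 * σ)
  have hd : 0 < d := div_pos (sub_pos.mpr (log_lt_log hyl hlu)) (by positivity)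
  have hℓ_centered : ∀ v, ℓ v = -log (logistic ((m - v) / σ + d) - logistic ((m - v) / σ - d)) := by
    intro v
    have hupper : (log yu - v) / σ = (m - v) / σ + d := by simp only [m, d]; field_simp; ring
    have hlower : (log yl - v) / σ = (m - v) / σ - d := by simp only [m, d]; field_simp; ring
    rw [hℓ, hFZ, hFZ, hupper, hlower]
    rfl
  have hx : (m - u) / σ ≠ 0 := div_ne_zero (sub_ne_zero.mpr hu.symm) hσ.ne'
  rw [hℓ_centered, hℓ_centered, sub_self, zero_div]
  exact neg_lt_neg (log_lt_log (logistic_add_sub_logistic_sub_pos _ hd)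
    (logistic_add_sub_logistic_sub_lt hd hx))
end

section
/- The interval-censored AFT loss ℓ(u) = −ln(F_Z(s(ȳ)) − F_Z(s(y̲))) with the logistic CDF satisfies lim_{u→−∞} ℓ'(u) = −1/σ and lim_{u→+∞} ℓ'(u) = 1/σ; in particular ℓ has globally bounded gradient in u. -/
/-!
The logistic CDF is the sigmoid, whose density is `f_Z = F_Z (1 - F_Z)`; the identity
`p (1 - p) - q (1 - q) = (p - q) (1 - p - q)` collapses the gradient to
`ℓ'(u) = (1 - F_Z(s(ȳ)) - F_Z(s(y̲))) / σ`. Both `F_Z`-values lie in `(0, 1)` and tend to `1`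
as `u → -∞` and to `0` as `u → +∞`, which gives the two limits and the bound `|ℓ'| ≤ 1 / σ`.
-/

open Filter Real Topology

lemma exp_div_one_add_exp (z : ℝ) : exp z / (1 + exp z) = sigmoid z := by
  rw [sigmoid_def, exp_neg]
  field_simp
  ring

lemma mul_one_sub_sub_mul_one_sub_div_sub {K : Type*} [Field K] {p q : K} (h : p ≠ q) :
    (p * (1 - p) - q * (1 - q)) / (p - q) = 1 - p - q := by
  rw [div_eq_iff (sub_ne_zero.2 h)]
  ring

lemma deriv_sigmoid_sub_div_sigmoid_sub {a b : ℝ} (h : a ≠ b) :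
    (deriv sigmoid a - deriv sigmoid b) / (sigmoid a - sigmoid b) =
      1 - sigmoid a - sigmoid b := by
  rw [deriv_sigmoid]
  exact mul_one_sub_sub_mul_one_sub_div_sub (sigmoid_injective.ne h)

lemma abs_one_sub_sigmoid_sub_sigmoid_le (a b : ℝ) : |1 - sigmoid a - sigmoid b| ≤ 1 := by
  rw [abs_le]
  constructor <;> linarith [sigmoid_pos a, sigmoid_pos b, sigmoid_lt_one a, sigmoid_lt_one b]

lemma tendsto_sigmoid_sub_div_atBot {σ : ℝ} (hσ : 0 < σ) (c : ℝ) :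
    Tendsto (fun u => sigmoid ((c - u) / σ)) atBot (𝓝 1) :=
  tendsto_sigmoid_atTop.comp
    ((tendsto_atTop_add_const_left _ c tendsto_neg_atBot_atTop).atTop_div_const hσ)

lemma tendsto_sigmoid_sub_div_atTop {σ : ℝ} (hσ : 0 < σ) (c : ℝ) :
    Tendsto (fun u => sigmoid ((c - u) / σ)) atTop (𝓝 0) :=
  tendsto_sigmoid_atBot.comp
    ((tendsto_atBot_add_const_left _ c tendsto_neg_atTop_atBot).atBot_div_const hσ)

theorem stmt_18 (σ yl yu : ℝ) (hσ : 0 < σ) (hyl : 0 < yl) (hlu : yl < yu)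
    (FZ fZ : ℝ → ℝ)
    (hFZ : ∀ z, FZ z = Real.exp z / (1 + Real.exp z))
    (hfZ : ∀ z, fZ z = deriv FZ z)
    (ℓ' : ℝ → ℝ)
    (hℓ' : ∀ u, ℓ' u =
      (fZ ((Real.log yu - u) / σ) - fZ ((Real.log yl - u) / σ)) /
        (σ * (FZ ((Real.log yu - u) / σ) - FZ ((Real.log yl - u) / σ)))) :
    Tendsto ℓ' atBot (nhds (-1 / σ)) ∧
    Tendsto ℓ' atTop (nhds (1 / σ)) ∧
    ∃ M : ℝ, ∀ u : ℝ, |ℓ' u| ≤ M := by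
  have hFZ_eq : FZ = sigmoid := funext fun z => (hFZ z).trans (exp_div_one_add_exp z)
  have hfZ_eq : fZ = deriv sigmoid := funext fun z => by rw [hfZ, hFZ_eq]
  have hℓ'_eq : ℓ' = fun u =>
      (1 - sigmoid ((log yu - u) / σ) - sigmoid ((log yl - u) / σ)) / σ := by
    funext u
    have hne : (log yu - u) / σ ≠ (log yl - u) / σ :=
      ((div_lt_div_iff_of_pos_right hσ).2 (sub_lt_sub_right (log_lt_log hyl hlu) u)).ne'
    rw [hℓ', hFZ_eq, hfZ_eq, mul_comm, ← div_div, deriv_sigmoid_sub_div_sigmoid_sub hne]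
  subst hℓ'_eq
  refine ⟨?_, ?_, 1 / σ, fun u => ?_⟩
  · convert ((tendsto_const_nhds.sub (tendsto_sigmoid_sub_div_atBot hσ (log yu))).sub
      (tendsto_sigmoid_sub_div_atBot hσ (log yl))).div_const σ using 2
    norm_num
  · convert ((tendsto_const_nhds.sub (tendsto_sigmoid_sub_div_atTop hσ (log yu))).sub
      (tendsto_sigmoid_sub_div_atTop hσ (log yl))).div_const σ using 2
    norm_num
  · rw [abs_div, abs_of_pos hσ]
    exact div_le_div_of_nonneg_right (abs_one_sub_sigmoid_sub_sigmoid_le _ _) hσ.le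
end

section
/- For the normal-distribution AFT model, the interval-censored gradient (f_Z(s(ȳ)) − f_Z(s(y̲)))/(σ(F_Z(s(ȳ)) − F_Z(s(y̲)))) tends to +∞ as u → +∞ and to −∞ as u → −∞, where f_Z and F_Z are the standard normal PDF and CDF and 0 < y̲ < ȳ. -/
/-!
With `α = s(ȳ)` and `d = (ln ȳ - ln y̲) / σ > 0` the gradient is `R(α) / σ`, where
`R(α) = (φ α - φ (α - d)) / (Φ α - Φ (α - d))` and `u → ±∞` means `α → ∓∞`.
As `α → -∞`, `φ (α - d) / φ α = exp (d α - d² / 2) → 0`, so the numerator is eventually at least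
`φ α / 2`, while the Mills bound `Φ α ≤ φ α / (-α)` bounds the denominator; hence `R(α) ≥ -α / 2`.
The symmetry `φ (-x) = φ x` gives `R(d - α) = -R(α)`, which turns this into the limit at `+∞`.
-/

open Filter MeasureTheory Set Real

lemma tendsto_const_sub_atTop_atBot {G : Type*} [AddCommGroup G] [PartialOrder G]
    [IsOrderedAddMonoid G] (c : G) : Tendsto (fun x => c - x) atTop atBot := by
  simpa only [sub_eq_add_neg] using tendsto_atBot_add_const_left _ c tendsto_neg_atTop_atBot

lemma tendsto_const_sub_atBot_atTop {G : Type*} [AddCommGroup G] [PartialOrder G]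
    [IsOrderedAddMonoid G] (c : G) : Tendsto (fun x => c - x) atBot atTop := by
  simpa only [sub_eq_add_neg] using tendsto_atTop_add_const_left _ c tendsto_neg_atBot_atTop

noncomputable def stdNormalPDF (z : ℝ) : ℝ := exp (-z ^ 2 / 2) / √(2 * π)

noncomputable def stdNormalCDF (z : ℝ) : ℝ := ∫ t in Iic z, stdNormalPDF t

local notation "φ" => stdNormalPDF
local notation "Φ" => stdNormalCDF

lemma stdNormalPDF_pos (z : ℝ) : 0 < φ z := by
  unfold stdNormalPDF; positivity

lemma stdNormalPDF_neg (z : ℝ) : φ (-z) = φ z := by simp [stdNormalPDF]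

lemma stdNormalPDF_sub (α d : ℝ) : φ (α - d) = φ α * exp (d * α - d ^ 2 / 2) := by
  rw [stdNormalPDF, stdNormalPDF, div_mul_eq_mul_div, ← exp_add]
  ring_nf

lemma integrable_stdNormalPDF : Integrable φ := by
  refine ((integrable_exp_neg_mul_sq (by norm_num : (0 : ℝ) < 1 / 2)).div_const
    √(2 * π)).congr (Eventually.of_forall fun z => ?_)
  rw [stdNormalPDF]
  ring_nf

lemma hasDerivAt_stdNormalPDF (t : ℝ) : HasDerivAt φ (-(t * φ t)) t := by
  have hexponent : HasDerivAt (fun x : ℝ => -x ^ 2 / 2) (-t) t :=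
    ((hasDerivAt_pow 2 t).fun_neg.div_const 2).congr_deriv (by ring)
  exact (hexponent.exp.div_const √(2 * π)).congr_deriv (by unfold stdNormalPDF; ring)

lemma tendsto_stdNormalPDF_atTop : Tendsto φ atTop (nhds 0) := by
  have h : Tendsto (fun z : ℝ => -z ^ 2 / 2) atTop atBot :=
    (tendsto_neg_atTop_atBot.comp (tendsto_pow_atTop two_ne_zero)).atBot_div_const two_pos
  unfold stdNormalPDF
  simpa only [Function.comp_def, zero_div] using (tendsto_exp_atBot.comp h).div_const √(2 * π)

/-- Mills' ratio bound: on `(b, ∞)` the density is at most `t φ(t) / b`, whose primitive is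
`-φ(t) / b`. -/
lemma integral_Ioi_stdNormalPDF_le {b : ℝ} (hb : 0 < b) : ∫ t in Ioi b, φ t ≤ φ b / b := by
  have hderiv : ∀ t ∈ Ici b, HasDerivAt (-φ) (t * φ t) t :=
    fun t _ => neg_neg (t * φ t) ▸ (hasDerivAt_stdNormalPDF t).neg
  have hnonneg : ∀ t ∈ Ioi b, 0 ≤ t * φ t :=
    fun t ht => mul_nonneg (hb.trans ht).le (stdNormalPDF_pos t).le
  have hlim : Tendsto (-φ) atTop (nhds (-0)) := tendsto_stdNormalPDF_atTop.neg
  calc ∫ t in Ioi b, φ t ≤ ∫ t in Ioi b, t * φ t / b := by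
        refine setIntegral_mono_on integrable_stdNormalPDF.integrableOn
          ((integrableOn_Ioi_deriv_of_nonneg' hderiv hnonneg hlim).div_const b)
          measurableSet_Ioi fun t ht => ?_
        rw [le_div_iff₀ hb, mul_comm]
        exact mul_le_mul_of_nonneg_right ht.le (stdNormalPDF_pos t).le
    _ = φ b / b := by
        rw [integral_div, integral_Ioi_of_hasDerivAt_of_nonneg' hderiv hnonneg hlim, Pi.neg_apply]
        ring

lemma stdNormalCDF_nonneg (z : ℝ) : 0 ≤ Φ z :=
  setIntegral_nonneg measurableSet_Iic fun t _ => (stdNormalPDF_pos t).le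

lemma stdNormalCDF_sub (a b : ℝ) : Φ b - Φ a = ∫ t in a..b, φ t := by
  rw [stdNormalCDF, stdNormalCDF, intervalIntegral.integral_Iic_sub_Iic
    integrable_stdNormalPDF.integrableOn integrable_stdNormalPDF.integrableOn]

lemma stdNormalCDF_sub_pos {a b : ℝ} (hab : a < b) : 0 < Φ b - Φ a := by
  rw [stdNormalCDF_sub]
  exact intervalIntegral.intervalIntegral_pos_of_pos integrable_stdNormalPDF.intervalIntegrable
    stdNormalPDF_pos hab

lemma stdNormalCDF_sub_comm_neg (a b : ℝ) : Φ b - Φ a = Φ (-a) - Φ (-b) := by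
  rw [stdNormalCDF_sub, stdNormalCDF_sub, ← intervalIntegral.integral_comp_neg]
  simp only [stdNormalPDF_neg]

lemma stdNormalCDF_le_of_neg {z : ℝ} (hz : z < 0) : Φ z ≤ φ z / -z := by
  have hΦ : Φ z = ∫ t in Ioi (-z), φ t := by
    rw [stdNormalCDF, ← neg_neg z, ← integral_comp_neg_Ioi]
    simp only [neg_neg, stdNormalPDF_neg]
  rw [hΦ, ← stdNormalPDF_neg z]
  exact integral_Ioi_stdNormalPDF_le (neg_pos.2 hz)

noncomputable def intervalGradient (d α : ℝ) : ℝ :=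
  (φ α - φ (α - d)) / (Φ α - Φ (α - d))

lemma intervalGradient_sub_left (d α : ℝ) : intervalGradient d (d - α) = -intervalGradient d α := by
  rw [intervalGradient, intervalGradient, sub_sub_cancel_left, ← neg_sub α d, stdNormalPDF_neg,
    stdNormalPDF_neg, stdNormalCDF_sub_comm_neg, neg_neg, neg_neg, ← neg_sub (φ α), neg_div]

lemma neg_div_two_le_intervalGradient {d α : ℝ} (hd : 0 < d) (hα : α < 0)
    (hhalf : φ (α - d) ≤ φ α / 2) : -α / 2 ≤ intervalGradient d α := by
  have hD : 0 < Φ α - Φ (α - d) := stdNormalCDF_sub_pos (by linarith)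
  have hDle : -α * (Φ α - Φ (α - d)) ≤ φ α := by
    have := (le_div_iff₀' (neg_pos.2 hα)).1 (stdNormalCDF_le_of_neg hα)
    nlinarith [stdNormalCDF_nonneg (α - d)]
  rw [intervalGradient, le_div_iff₀ hD]
  linarith

lemma eventually_stdNormalPDF_sub_le_half {d : ℝ} (hd : 0 < d) :
    ∀ᶠ α in atBot, φ (α - d) ≤ φ α / 2 := by
  have hexp : Tendsto (fun α => exp (d * α - d ^ 2 / 2)) atBot (nhds 0) :=
    tendsto_exp_atBot.comp <| tendsto_atBot_add_const_right _ _ <|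
      tendsto_id.const_mul_atBot hd
  filter_upwards [hexp.eventually_le_const (by norm_num : (0 : ℝ) < 1 / 2)] with α hα
  rw [stdNormalPDF_sub]
  nlinarith [stdNormalPDF_pos α]

lemma tendsto_intervalGradient_atBot {d : ℝ} (hd : 0 < d) :
    Tendsto (intervalGradient d) atBot atTop := by
  refine tendsto_atTop_mono' _ ?_ (tendsto_neg_atBot_atTop.atTop_div_const two_pos)
  filter_upwards [eventually_lt_atBot 0, eventually_stdNormalPDF_sub_le_half hd] with α hα hhalf
  exact neg_div_two_le_intervalGradient hd hα hhalf

lemma tendsto_intervalGradient_atTop {d : ℝ} (hd : 0 < d) :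
    Tendsto (intervalGradient d) atTop atBot := by
  refine (tendsto_neg_atTop_atBot.comp ((tendsto_intervalGradient_atBot hd).comp
    (tendsto_const_sub_atTop_atBot d))).congr fun α => ?_
  simp only [Function.comp_apply, intervalGradient_sub_left, neg_neg]

theorem stmt_19 (σ yl yu : ℝ) (hσ : 0 < σ) (hyl : 0 < yl) (hlu : yl < yu)
    (fZ FZ : ℝ → ℝ)
    (hfZ : ∀ z, fZ z = Real.exp (-z ^ 2 / 2) / Real.sqrt (2 * Real.pi))
    (hFZ : ∀ z, FZ z = ∫ t in Set.Iic z, fZ t) :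
    Tendsto (fun u => (fZ ((Real.log yu - u) / σ) - fZ ((Real.log yl - u) / σ)) /
        (σ * (FZ ((Real.log yu - u) / σ) - FZ ((Real.log yl - u) / σ)))) atTop atTop ∧
    Tendsto (fun u => (fZ ((Real.log yu - u) / σ) - fZ ((Real.log yl - u) / σ)) /
        (σ * (FZ ((Real.log yu - u) / σ) - FZ ((Real.log yl - u) / σ)))) atBot atBot := by
  obtain rfl : fZ = φ := funext hfZ
  obtain rfl : FZ = Φ := funext hFZ
  have hd : 0 < (log yu - log yl) / σ := div_pos (sub_pos.2 (log_lt_log hyl hlu)) hσ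
  have hgrad : ∀ u, (φ ((log yu - u) / σ) - φ ((log yl - u) / σ)) /
      (σ * (Φ ((log yu - u) / σ) - Φ ((log yl - u) / σ))) =
      intervalGradient ((log yu - log yl) / σ) ((log yu - u) / σ) / σ := by
    intro u
    rw [intervalGradient, div_mul_eq_div_div_swap, div_sub_div_same, sub_sub_sub_cancel_left]
  simp only [hgrad]
  exact ⟨((tendsto_intervalGradient_atBot hd).comp
      ((tendsto_const_sub_atTop_atBot _).atBot_div_const hσ)).atTop_div_const hσ,
    ((tendsto_intervalGradient_atTop hd).comp
      ((tendsto_const_sub_atBot_atTop _).atTop_div_const hσ)).atBot_div_const hσ⟩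
end
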